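/- arXiv:1703.03998 — 4 statements merged into one kernel-verified Lean document; each statement's English description precedes it below -/
import Mathlib

section
/- Suppose every edge of G is dominated and every edge of M is tight (with respect to y, 𝓑 and z). Then every augmenting path P with free endpoints f₁ and f₂ satisfies w(P) ≤ y(f₁) + y(f₂). In particular, if y takes the same value on all free vertices, then w(P) ≤ 2y(f) for every free vertex f. -/
open SimpleGraph

attribute [local instance] Classical.propDecidable

variable {V : Type*}

def IsMatchingSet (G : SimpleGraph V) (M : Finset (Sym2 V)) : Prop :=
  (∀ e ∈ M, e ∈ G.edgeSet) ∧
    ∀ e ∈ M, ∀ f ∈ M, e ≠ f → ∀ v : V, v ∈ e → v ∉ f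

def IsFree (M : Finset (Sym2 V)) (v : V) : Prop := ∀ e ∈ M, v ∉ e

def IsAlternating (M : Finset (Sym2 V)) {G : SimpleGraph V} {u v : V}
    (P : G.Walk u v) : Prop :=
  List.Chain' (fun e f => ¬(e ∈ M ↔ f ∈ M)) P.edges

def IsAugmenting (M : Finset (Sym2 V)) {G : SimpleGraph V} {f₁ f₂ : V}
    (P : G.Walk f₁ f₂) : Prop :=
  P.IsPath ∧ f₁ ≠ f₂ ∧ IsFree M f₁ ∧ IsFree M f₂ ∧ IsAlternating M P

noncomputable def pathWeight (w : Sym2 V → ℝ) (M : Finset (Sym2 V)) {G : SimpleGraph V}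
    {u v : V} (P : G.Walk u v) : ℝ :=
  ((P.edges.filter fun e => e ∉ M).map w).sum -
    ((P.edges.filter fun e => e ∈ M).map w).sum

def InternallyNearMatched (M : Finset (Sym2 V)) (B : Finset V) (b : V) : Prop :=
  b ∈ B ∧ (∀ v ∈ B, s(b, v) ∉ M) ∧
    ∀ v ∈ B, v ≠ b → ∃ u ∈ B, u ≠ v ∧ s(u, v) ∈ M

noncomputable def dualLoad (y : V → ℝ) (𝓑 : Finset (Finset V)) (z : Finset V → ℝ)
    (u v : V) : ℝ :=
  y u + y v + ∑ B ∈ 𝓑.filter (fun B => u ∈ B ∧ v ∈ B), z B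

def Dominated (w : Sym2 V → ℝ) (y : V → ℝ) (𝓑 : Finset (Finset V)) (z : Finset V → ℝ)
    (u v : V) : Prop :=
  w s(u, v) ≤ dualLoad y 𝓑 z u v

def Tight (w : Sym2 V → ℝ) (y : V → ℝ) (𝓑 : Finset (Finset V)) (z : Finset V → ℝ)
    (u v : V) : Prop :=
  w s(u, v) = dualLoad y 𝓑 z u v

/-!
Induct on alternating paths that end at the free vertex `f₂` and start with an unmatched edge,
removing two edges `vb ∉ M`, `bc ∈ M` at a time. Domination bounds `w(vb)` and tightness fixes
`w(bc)`, so the `y`-terms telescope. A blossom `B` containing `v` and `b` charges `z B` to `vb`;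
if `b` is not the base of `B`, its matching edge `bc` stays inside `B` and refunds it, and
otherwise `v` lies in `B` off its base with the base `b` still ahead. The invariant therefore
allows one extra `z B` for each such blossom (`openBlossomLoad`); at the free vertex `f₁` there
are none, since a free vertex of a blossom is its base.
-/

lemma IsMatchingSet.eq_of_mk_mem_of_mk_mem {G : SimpleGraph V} {M : Finset (Sym2 V)}
    (hM : IsMatchingSet G M) {a b c : V} (hb : s(a, b) ∈ M) (hc : s(a, c) ∈ M) : b = c := by
  by_contra hbc
  exact hM.2 _ hb _ hc (mt Sym2.congr_right.mp hbc) a (Sym2.mem_mk_left a b)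
    (Sym2.mem_mk_left a c)

namespace InternallyNearMatched

variable {M : Finset (Sym2 V)} {B : Finset V} {b : V}

lemma eq_of_isFree (hB : InternallyNearMatched M B b) {f : V} (hf : IsFree M f)
    (hfB : f ∈ B) : f = b := by
  by_contra hne
  obtain ⟨u, -, -, hu⟩ := hB.2.2 f hfB hne
  exact hf _ hu (Sym2.mem_mk_right u f)

lemma mem_of_mk_mem {G : SimpleGraph V} (hB : InternallyNearMatched M B b)
    (hM : IsMatchingSet G M) {x u : V} (hx : x ∈ B) (hxb : x ≠ b) (hxu : s(x, u) ∈ M) :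
    u ∈ B := by
  obtain ⟨p, hp, -, hpx⟩ := hB.2.2 x hx hxb
  rwa [← hM.eq_of_mk_mem_of_mk_mem (Sym2.eq_swap ▸ hpx) hxu]

end InternallyNearMatched

section Walk

variable {G : SimpleGraph V} {M : Finset (Sym2 V)}

lemma isAlternating_cons_cons_iff {u v x t : V} (h : G.Adj u v) (h' : G.Adj v x)
    (q : G.Walk x t) :
    _root_.IsAlternating M (.cons h (.cons h' q)) ↔
      ¬(s(u, v) ∈ M ↔ s(v, x) ∈ M) ∧ _root_.IsAlternating M (.cons h' q) := by
  simp only [_root_.IsAlternating, Walk.edges_cons]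
  exact List.isChain_cons_cons

variable {w : Sym2 V → ℝ}

@[simp]
lemma pathWeight_nil {u : V} : pathWeight w M (.nil : G.Walk u u) = 0 := by
  simp [pathWeight]

lemma pathWeight_cons_of_notMem {u v t : V} (h : G.Adj u v) (q : G.Walk v t)
    (he : s(u, v) ∉ M) : pathWeight w M (.cons h q) = w s(u, v) + pathWeight w M q := by
  simp [pathWeight, he, add_sub_assoc]

lemma pathWeight_cons_of_mem {u v t : V} (h : G.Adj u v) (q : G.Walk v t)
    (he : s(u, v) ∈ M) : pathWeight w M (.cons h q) = -w s(u, v) + pathWeight w M q := by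
  simp [pathWeight, he, sub_add_eq_sub_sub, neg_add_eq_sub, sub_right_comm]

end Walk

lemma Finset.sum_filter_add_sum_filter_le {ι : Type*} {s : Finset ι} {f : ι → ℝ}
    (hf : ∀ i ∈ s, 0 ≤ f i) {p₁ p₂ q₁ q₂ : ι → Prop} [DecidablePred p₁] [DecidablePred p₂]
    [DecidablePred q₁] [DecidablePred q₂] (h₂ : ∀ i ∈ s, p₂ i → q₁ i)
    (h₁₂ : ∀ i ∈ s, p₁ i → p₂ i → q₂ i) (h₁ : ∀ i ∈ s, p₁ i → ¬q₁ i → q₂ i) :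
    ∑ i ∈ s with p₁ i, f i + ∑ i ∈ s with p₂ i, f i ≤
      ∑ i ∈ s with q₁ i, f i + ∑ i ∈ s with q₂ i, f i := by
  simp only [Finset.sum_filter, ← Finset.sum_add_distrib]
  refine Finset.sum_le_sum fun i hi => ?_
  have := hf i hi
  split_ifs <;> grind

noncomputable def openBlossomLoad (𝓑 : Finset (Finset V)) (z : Finset V → ℝ)
    (base : Finset V → V) {G : SimpleGraph V} {v t : V} (Q : G.Walk v t) : ℝ :=
  ∑ B ∈ 𝓑 with v ∈ B ∧ v ≠ base B ∧ base B ∈ Q.support, z B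

section DualBound

variable {G : SimpleGraph V} {M : Finset (Sym2 V)} {w : Sym2 V → ℝ} {y : V → ℝ}
  {𝓑 : Finset (Finset V)} {z : Finset V → ℝ} {base : Finset V → V}

lemma openBlossomLoad_eq_zero_of_isFree
    (h𝓑 : ∀ B ∈ 𝓑, InternallyNearMatched M B (base B)) {v t : V} (Q : G.Walk v t)
    (hv : IsFree M v) : openBlossomLoad 𝓑 z base Q = 0 :=
  Finset.sum_eq_zero fun B hB => by
    rw [Finset.mem_filter] at hB
    exact absurd ((h𝓑 B hB.1).eq_of_isFree hv hB.2.1) hB.2.2.1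

lemma sum_le_openBlossomLoad_of_isFree (h𝓑 : ∀ B ∈ 𝓑, InternallyNearMatched M B (base B))
    (hz : ∀ B ∈ 𝓑, 0 ≤ z B) {v t : V} (h : G.Adj v t) (ht : IsFree M t) :
    ∑ B ∈ 𝓑 with v ∈ B ∧ t ∈ B, z B ≤ openBlossomLoad 𝓑 z base (.cons h .nil) := by
  refine Finset.sum_le_sum_of_subset_of_nonneg (fun B hB => ?_)
    fun B hB _ => hz B (Finset.mem_filter.mp hB).1
  simp only [Finset.mem_filter] at hB ⊢
  obtain ⟨hB𝓑, hvB, htB⟩ := hB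
  have htb : t = base B := (h𝓑 B hB𝓑).eq_of_isFree ht htB
  exact ⟨hB𝓑, hvB, htb ▸ h.ne, by simp [← htb]⟩

lemma sum_add_openBlossomLoad_le (hM : IsMatchingSet G M)
    (h𝓑 : ∀ B ∈ 𝓑, InternallyNearMatched M B (base B)) (hz : ∀ B ∈ 𝓑, 0 ≤ z B)
    {v b c t : V} (h : G.Adj v b) (h' : G.Adj b c) (q : G.Walk c t) (hbc : s(b, c) ∈ M)
    (hvq : v ∉ q.support) :
    ∑ B ∈ 𝓑 with v ∈ B ∧ b ∈ B, z B + openBlossomLoad 𝓑 z base q ≤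
      ∑ B ∈ 𝓑 with b ∈ B ∧ c ∈ B, z B + openBlossomLoad 𝓑 z base (.cons h (.cons h' q)) := by
  refine Finset.sum_filter_add_sum_filter_le hz ?_ ?_ ?_
  · rintro B hB ⟨hcB, hcb, -⟩
    exact ⟨(h𝓑 B hB).mem_of_mk_mem hM hcB hcb (Sym2.eq_swap ▸ hbc), hcB⟩
  · rintro B - ⟨hvB, -⟩ ⟨-, -, hbase⟩
    exact ⟨hvB, fun hv => hvq (hv ▸ hbase), by simp [hbase]⟩
  · rintro B hB ⟨hvB, hbB⟩ hcB
    have hbase : b = base B := by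
      by_contra hb
      exact hcB ⟨hbB, (h𝓑 B hB).mem_of_mk_mem hM hbB hb hbc⟩
    exact ⟨hvB, hbase ▸ h.ne, by simp [← hbase]⟩

theorem pathWeight_le_add_openBlossomLoad (hM : IsMatchingSet G M)
    (h𝓑 : ∀ B ∈ 𝓑, InternallyNearMatched M B (base B)) (hz : ∀ B ∈ 𝓑, 0 ≤ z B)
    (hdom : ∀ u v : V, G.Adj u v → Dominated w y 𝓑 z u v)
    (htight : ∀ u v : V, s(u, v) ∈ M → Tight w y 𝓑 z u v) {t : V} (ht : IsFree M t) :
    ∀ {v b : V} (h : G.Adj v b) (q : G.Walk b t), (Walk.cons h q).IsPath →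
      _root_.IsAlternating M (.cons h q) → s(v, b) ∉ M →
      pathWeight w M (.cons h q) ≤ y v + y t + openBlossomLoad 𝓑 z base (.cons h q)
  | v, _, h, .nil, _, _, hvt => by
    have hd : w s(v, t) ≤ _ := hdom v t h
    unfold dualLoad at hd
    rw [pathWeight_cons_of_notMem h _ hvt, pathWeight_nil]
    linarith [sum_le_openBlossomLoad_of_isFree h𝓑 hz h ht]
  | _, b, _, .cons _ .nil, _, hQ, hvb => by
    have hbt : s(b, t) ∈ M := by
      have := ((isAlternating_cons_cons_iff _ _ _).mp hQ).1
      tauto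
    exact absurd (Sym2.mem_mk_right b t) (ht _ hbt)
  | v, b, h, .cons (v := c) h' (.cons (v := d) h'' q), hP, hQ, hvb => by
    rw [isAlternating_cons_cons_iff, isAlternating_cons_cons_iff] at hQ
    obtain ⟨hvbc, hbcd, hQ'⟩ := hQ
    have hbc : s(b, c) ∈ M := by tauto
    have hcd : s(c, d) ∉ M := by tauto
    have ih := pathWeight_le_add_openBlossomLoad hM h𝓑 hz hdom htight ht h'' q hP.of_cons.of_cons hQ' hcd
    have hvq : v ∉ (Walk.cons h'' q).support := fun hv =>
      (Walk.cons_isPath_iff _ _).mp hP |>.2 (List.mem_cons_of_mem _ hv)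
    have hd : w s(v, b) ≤ _ := hdom v b h
    have htbc : w s(b, c) = _ := htight b c hbc
    rw [pathWeight_cons_of_notMem h _ hvb, pathWeight_cons_of_mem h' _ hbc]
    unfold dualLoad at hd htbc
    linarith [sum_add_openBlossomLoad_le hM h𝓑 hz h h' _ hbc hvq]

end DualBound

theorem weighted_dual_bound_on_augmenting_path
    {V : Type*} (G : SimpleGraph V) (M : Finset (Sym2 V))
    (w : Sym2 V → ℝ) (y : V → ℝ) (𝓑 : Finset (Finset V)) (z : Finset V → ℝ)
    (base : Finset V → V)
    (hM : IsMatchingSet G M)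
    (h𝓑 : ∀ B ∈ 𝓑, InternallyNearMatched M B (base B))
    (hz : ∀ B ∈ 𝓑, 0 ≤ z B)
    (hdom : ∀ u v : V, G.Adj u v → Dominated w y 𝓑 z u v)
    (htight : ∀ u v : V, s(u, v) ∈ M → Tight w y 𝓑 z u v)
    {f₁ f₂ : V} (P : G.Walk f₁ f₂) (hP : IsAugmenting M P) :
    pathWeight w M P ≤ y f₁ + y f₂ ∧
      ((∀ u v : V, IsFree M u → IsFree M v → y u = y v) →
        ∀ f : V, IsFree M f → pathWeight w M P ≤ 2 * y f) := by
  obtain ⟨hpath, hne, hf₁, hf₂, halt⟩ := hP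
  have hbound : pathWeight w M P ≤ y f₁ + y f₂ := by
    cases P with
    | nil => exact absurd rfl hne
    | cons h q =>
      have := pathWeight_le_add_openBlossomLoad hM h𝓑 hz hdom htight hf₂ h q hpath halt
        fun hm => hf₁ _ hm (Sym2.mem_mk_left _ _)
      rwa [openBlossomLoad_eq_zero_of_isFree h𝓑 _ hf₁, add_zero] at this
  exact ⟨hbound, fun hy f hf => by linarith [hy f₁ f hf₁ hf, hy f₂ f hf₂ hf]⟩
end

section
/- Let B ⊆ V be internally near-matched for M with base vertex b. Then every augmenting path P satisfies |{e ∈ P \ M : e ∈ γ(B)}| ≤ |{e ∈ P ∩ M : e ∈ γ(B)}|, i.e., P contains at most as many unmatched edges with both ends in B as matched edges with both ends in B. -/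
open SimpleGraph

attribute [local instance] Classical.propDecidable

variable {V : Type*}

/-!
Follow the path from one free end. Every vertex of `B \ {b}` is matched inside `B`, so the
matched edge at such a vertex leads to another vertex of `B \ {b}`, the matched edge at `b`
leaves `B`, and no free vertex lies in `B \ {b}`. Peeling off one unmatched and one matched edge
at a time shows that a suffix of the path starting at `u` has at most one more unmatched than
matched edge inside `B`, and that this surplus occurs only if `u ∈ B \ {b}` and the suffix still
passes through `b`. A free end is not in `B \ {b}`, so the whole path has no surplus.
-/

lemma IsMatchingSet.eq_of_mem {G : SimpleGraph V} {M : Finset (Sym2 V)} (hM : IsMatchingSet G M)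
    {e f : Sym2 V} (he : e ∈ M) (hf : f ∈ M) {v : V} (hve : v ∈ e) (hvf : v ∈ f) : e = f := by
  by_contra hne
  exact hM.2 e he f hf hne v hve hvf

namespace InternallyNearMatched

variable {G : SimpleGraph V} {M : Finset (Sym2 V)} {B : Finset V} {b v w : V}

lemma eq_base_of_isFree (hB : InternallyNearMatched M B b) (hv : IsFree M v) (hvB : v ∈ B) :
    v = b := by
  by_contra hvb
  obtain ⟨u, -, -, huv⟩ := hB.2.2 v hvB hvb
  exact hv _ huv (Sym2.mem_mk_right u v)

lemma notMem_of_base_edge_mem (hB : InternallyNearMatched M B b) (hbw : s(b, w) ∈ M) :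
    w ∉ B :=
  fun hwB => hB.2.1 w hwB hbw

lemma mate_mem_of_ne_base (hM : IsMatchingSet G M) (hB : InternallyNearMatched M B b)
    (hvB : v ∈ B) (hvb : v ≠ b) (hvw : s(v, w) ∈ M) : w ∈ B ∧ w ≠ b := by
  obtain ⟨u, huB, huv, hmate⟩ := hB.2.2 v hvB hvb
  obtain rfl : w = u := by
    rcases Sym2.eq_iff.mp (hM.eq_of_mem hvw hmate (Sym2.mem_mk_left v w) (Sym2.mem_mk_right u v))
      with ⟨rfl, -⟩ | ⟨-, rfl⟩
    · exact absurd rfl huv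
    · rfl
  refine ⟨huB, ?_⟩
  rintro rfl
  exact hB.2.1 v hvB (Sym2.eq_swap ▸ hvw)

end InternallyNearMatched

namespace SimpleGraph.Walk

variable {G : SimpleGraph V} {M : Finset (Sym2 V)} {B : Finset V} {u v w : V}

noncomputable def unmatchedInside (M : Finset (Sym2 V)) (B : Finset V) (Q : G.Walk u v) : ℕ :=
  (Q.edges.filter fun e => e ∉ M ∧ ∀ x ∈ e, x ∈ B).length

noncomputable def matchedInside (M : Finset (Sym2 V)) (B : Finset V) (Q : G.Walk u v) : ℕ :=
  (Q.edges.filter fun e => e ∈ M ∧ ∀ x ∈ e, x ∈ B).length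

@[simp]
lemma unmatchedInside_nil : (nil : G.Walk u u).unmatchedInside M B = 0 := rfl

@[simp]
lemma matchedInside_nil : (nil : G.Walk u u).matchedInside M B = 0 := rfl

lemma unmatchedInside_cons (h : G.Adj u v) (Q : G.Walk v w) :
    (cons h Q).unmatchedInside M B =
      (if s(u, v) ∉ M ∧ u ∈ B ∧ v ∈ B then 1 else 0) + Q.unmatchedInside M B := by
  simp only [unmatchedInside, edges_cons, List.filter_cons, Sym2.forall_mem_pair]
  split_ifs <;> simp_all [Nat.add_comm]

lemma matchedInside_cons (h : G.Adj u v) (Q : G.Walk v w) :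
    (cons h Q).matchedInside M B =
      (if s(u, v) ∈ M ∧ u ∈ B ∧ v ∈ B then 1 else 0) + Q.matchedInside M B := by
  simp only [matchedInside, edges_cons, List.filter_cons, Sym2.forall_mem_pair]
  split_ifs <;> simp_all [Nat.add_comm]

end SimpleGraph.Walk

section

open SimpleGraph.Walk

variable {G : SimpleGraph V} {M : Finset (Sym2 V)} {B : Finset V} {b u v w f : V}

lemma IsFree.head_edge_notMem (hu : IsFree M u) (Q : G.Walk u v) :
    ∀ e ∈ Q.edges.head?, e ∉ M := by
  cases Q with
  | nil => simp
  | cons h Q => simpa using fun he => hu _ he (Sym2.mem_mk_left _ _)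

lemma IsAlternating.tail {h : G.Adj u v} {Q : G.Walk v w}
    (hQ : IsAlternating M (cons h Q)) : IsAlternating M Q :=
  (List.isChain_cons.mp hQ).2

lemma IsAlternating.mem_iff_head_notMem {h : G.Adj u v} {Q : G.Walk v w}
    (hQ : IsAlternating M (cons h Q)) : ∀ e ∈ Q.edges.head?, (s(u, v) ∈ M ↔ e ∉ M) := by
  intro e he
  have := (List.isChain_cons.mp hQ).1 e he
  tauto

theorem IsAlternating.unmatchedInside_le (hM : IsMatchingSet G M)
    (hB : InternallyNearMatched M B b) (hf : IsFree M f) :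
    ∀ {u : V} {Q : G.Walk u f}, IsAlternating M Q → Q.IsPath → (∀ e ∈ Q.edges.head?, e ∉ M) →
      Q.unmatchedInside M B ≤
        Q.matchedInside M B + if u ∈ B ∧ u ≠ b ∧ b ∈ Q.support then 1 else 0
  | _, nil, _, _, _ => by simp
  | u, cons h nil, _, _, hfirst => by
    have huf : s(u, f) ∉ M := hfirst _ rfl
    have hfb : f ∈ B → f = b := hB.eq_base_of_isFree hf
    have hne : u ≠ f := h.ne
    rw [unmatchedInside_cons, matchedInside_cons]
    split_ifs <;> simp_all
  | u, cons (v := v) h (cons (v := w) h' Q), halt, hpath, hfirst => by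
    have huv : s(u, v) ∉ M := hfirst _ rfl
    have hvw : s(v, w) ∈ M := by simpa [huv] using halt.mem_iff_head_notMem _ rfl
    have ih := halt.tail.tail.unmatchedInside_le hM hB hf hpath.of_cons.of_cons fun e he =>
      (halt.tail.mem_iff_head_notMem e he).mp hvw
    obtain ⟨⟨hne, hu⟩, -⟩ : (u ≠ v ∧ u ∉ Q.support) ∧ v ∉ Q.support ∧ Q.support.Nodup := by
      simpa using hpath.support_nodup
    rw [unmatchedInside_cons, unmatchedInside_cons, matchedInside_cons, matchedInside_cons]
    by_cases hvB : v ∈ B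
    · by_cases hvb : v = b
      · subst hvb
        have hwB : w ∉ B := hB.notMem_of_base_edge_mem hvw
        grind
      · obtain ⟨hwB, hwb⟩ := hB.mate_mem_of_ne_base hM hvB hvb hvw
        grind
    · have hwb : w ∈ B → w = b := fun hwB => by
        by_contra hwb
        exact hvB (hB.mate_mem_of_ne_base hM hwB hwb (Sym2.eq_swap ▸ hvw)).1
      grind

end

theorem augmenting_path_unmatched_le_matched_in_blossom
    {V : Type*} (G : SimpleGraph V) (M : Finset (Sym2 V))
    (B : Finset V) (b : V)
    (hM : IsMatchingSet G M)
    (hB : InternallyNearMatched M B b)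
    {f₁ f₂ : V} (P : G.Walk f₁ f₂) (hP : IsAugmenting M P) :
    (P.edges.filter fun e => e ∉ M ∧ ∀ x ∈ e, x ∈ B).length ≤
      (P.edges.filter fun e => e ∈ M ∧ ∀ x ∈ e, x ∈ B).length := by
  obtain ⟨hpath, -, hf₁, hf₂, halt⟩ := hP
  have hsurplus : ¬(f₁ ∈ B ∧ f₁ ≠ b ∧ b ∈ P.support) :=
    fun ⟨hf₁B, hf₁b, _⟩ => hf₁b (hB.eq_base_of_isFree hf₁ hf₁B)
  have h := halt.unmatchedInside_le hM hB hf₂ hpath (hf₁.head_edge_notMem P)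
  rwa [if_neg hsurplus, add_zero] at h
end

section
/- Let G have n vertices and let the edge weights be w(e) = 2 for e ∈ M and w(e) = 0 for e ∉ M. Suppose every edge of G is dominated and every edge of M is tight (with respect to y, 𝓑 and z). If G contains an augmenting path with free endpoints f₁ and f₂, then y(f₁) + y(f₂) ≥ 2 − n; in particular, if y takes the common value y_f on all free vertices, then y_f ≥ 1 − n/2. -/
open SimpleGraph

attribute [local instance] Classical.propDecidable

variable {V : Type*}

/-!
Write the augmenting path as `f₁ = v₀, …, v_k = f₂`; its edge `vᵢvᵢ₊₁` is matched iff `i` is odd,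
so `k` is odd. Summing the dual constraints of the path edges with signs `(-1)ⁱ` telescopes to
`y(f₁) + y(f₂)` plus, for every `B`, `z(B)` times (unmatched minus matched path edges inside `B`).
Dominance of the unmatched edges and tightness of the matched ones bound this sum below by `1 - k`,
and every blossom term is `≤ 0`: each vertex of `B` other than its base is matched inside `B`, hence
lies on a matched path edge inside `B`. Finally `k + 1 ≤ n` because the path is simple.
-/

open Finset

lemma Finset.card_filter_succ_mem_le (S : Finset ℕ) :
    (S.filter (· + 1 ∈ S)).card ≤ S.card - 1 := by
  rcases S.eq_empty_or_nonempty with rfl | hS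
  · simp
  · have hssub : S.filter (· + 1 ∈ S) ⊂ S := filter_ssubset.2
      ⟨S.max' hS, S.max'_mem hS, fun h => by simpa using S.le_max' _ h⟩
    have := card_lt_card hssub
    omega

lemma Finset.sum_range_neg_one_pow_mul_add {R : Type*} [CommRing R] (g : ℕ → R) {n : ℕ}
    (hn : Odd n) : ∑ i ∈ range n, (-1 : R) ^ i * (g i + g (i + 1)) = g 0 + g n := by
  calc ∑ i ∈ range n, (-1 : R) ^ i * (g i + g (i + 1))
      = ∑ i ∈ range n, ((-1 : R) ^ i * g i - (-1) ^ (i + 1) * g (i + 1)) := by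
        refine sum_congr rfl fun i _ => ?_
        ring
    _ = g 0 + g n := by
        rw [sum_range_sub' (fun i => (-1 : R) ^ i * g i), hn.neg_one_pow]
        ring

section Matching

variable {G : SimpleGraph V} {M : Finset (Sym2 V)}

lemma IsMatchingSet.eq_of_mem_of_mem (hM : IsMatchingSet G M) {e f : Sym2 V} (he : e ∈ M)
    (hf : f ∈ M) {x : V} (hxe : x ∈ e) (hxf : x ∈ f) : e = f :=
  by_contra fun hef => hM.2 e he f hf hef x hxe hxf

lemma InternallyNearMatched.not_isFree {B : Finset V} {b a : V}
    (hB : InternallyNearMatched M B b) (ha : a ∈ B) (hab : a ≠ b) : ¬IsFree M a := fun hfree =>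
  have ⟨_, _, _, hM⟩ := hB.2.2 a ha hab
  hfree _ hM (Sym2.mem_mk_right _ _)

lemma InternallyNearMatched.mem_of_mk_mem_s10 (hM : IsMatchingSet G M) {B : Finset V} {b a c : V}
    (hB : InternallyNearMatched M B b) (ha : a ∈ B) (hab : a ≠ b) (hac : s(a, c) ∈ M) :
    c ∈ B := by
  obtain ⟨u, huB, hua, huM⟩ := hB.2.2 a ha hab
  rcases Sym2.eq_iff.1 (hM.eq_of_mem_of_mem hac huM (Sym2.mem_mk_left a c)
    (Sym2.mem_mk_right u a)) with ⟨rfl, -⟩ | ⟨-, rfl⟩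
  · exact absurd rfl hua
  · exact huB

end Matching

section Alternating

variable {G : SimpleGraph V} {M : Finset (Sym2 V)} {u v : V} {P : G.Walk u v}

lemma IsAlternating.mk_mem_iff_odd (hP : IsAlternating M P) (hu : IsFree M u) :
    ∀ i < P.length, s(P.getVert i, P.getVert (i + 1)) ∈ M ↔ Odd i := by
  intro i
  induction i with
  | zero =>
    intro _
    simpa using fun h => hu _ h (Sym2.mem_mk_left _ _)
  | succ n ih =>
    intro hn
    have hchain := List.isChain_iff_getElem.mp hP n (by rw [Walk.length_edges]; omega)
    rw [Walk.getElem_edges, Walk.getElem_edges] at hchain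
    rw [Nat.odd_add_one, ← ih (by omega)]
    tauto

lemma IsAugmenting.odd_length (hP : IsAugmenting M P) : Odd P.length := by
  obtain ⟨-, hne, hu, hv, halt⟩ := hP
  have hpos : 0 < P.length := Nat.pos_of_ne_zero fun h => hne (P.eq_of_length_eq_zero h)
  have hlast := halt.mk_mem_iff_odd hu (P.length - 1) (by omega)
  rw [Nat.sub_add_cancel hpos, P.getVert_length] at hlast
  have hpred : ¬Odd (P.length - 1) := fun h => hv _ (hlast.2 h) (Sym2.mem_mk_right _ _)
  rw [Nat.not_odd_iff_even] at hpred
  exact Nat.sub_add_cancel hpos ▸ hpred.add_one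

lemma IsAugmenting.mk_mem_iff_odd (hP : IsAugmenting M P) :
    ∀ i < P.length, s(P.getVert i, P.getVert (i + 1)) ∈ M ↔ Odd i :=
  hP.2.2.2.2.mk_mem_iff_odd hP.2.2.1

end Alternating

namespace SimpleGraph.Walk

variable {G : SimpleGraph V} {u v : V}

noncomputable def positionsIn (P : G.Walk u v) (B : Finset V) : Finset ℕ :=
  (range (P.length + 1)).filter (P.getVert · ∈ B)

noncomputable def edgeIndicesIn (P : G.Walk u v) (B : Finset V) : Finset ℕ :=
  (P.positionsIn B).filter (· + 1 ∈ P.positionsIn B)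

variable {P : G.Walk u v} {B : Finset V} {i : ℕ}

lemma mem_positionsIn : i ∈ P.positionsIn B ↔ i ≤ P.length ∧ P.getVert i ∈ B := by
  simp [positionsIn]

lemma mem_edgeIndicesIn :
    i ∈ P.edgeIndicesIn B ↔ i < P.length ∧ P.getVert i ∈ B ∧ P.getVert (i + 1) ∈ B := by
  simp only [edgeIndicesIn, mem_filter, mem_positionsIn]
  constructor
  · rintro ⟨⟨-, hi⟩, hlt, hi'⟩
    exact ⟨by omega, hi, hi'⟩
  · rintro ⟨hlt, hi, hi'⟩
    exact ⟨⟨hlt.le, hi⟩, hlt, hi'⟩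

end SimpleGraph.Walk

section Blossom

variable {G : SimpleGraph V} {M : Finset (Sym2 V)} {u v : V} {P : G.Walk u v} {B : Finset V}
  {b : V}

lemma SimpleGraph.Walk.IsPath.card_positionsIn_le (hP : P.IsPath) (b : V) :
    (P.positionsIn B).card ≤ ((P.positionsIn B).filter (P.getVert · ≠ b)).card + 1 := by
  rw [← card_filter_add_card_filter_not (s := P.positionsIn B) (p := (P.getVert · ≠ b))]
  refine Nat.add_le_add_left (card_le_one.2 fun i hi j hj => ?_) _
  simp only [mem_filter, Walk.mem_positionsIn, not_not] at hi hj
  exact hP.getVert_injOn hi.1.1 hj.1.1 (hi.2.trans hj.2.symm)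

lemma IsAugmenting.positionsIn_filter_ne_subset (hM : IsMatchingSet G M) (hP : IsAugmenting M P)
    (hB : InternallyNearMatched M B b) :
    (P.positionsIn B).filter (P.getVert · ≠ b) ⊆
      (P.edgeIndicesIn B).filter Odd ∪ ((P.edgeIndicesIn B).filter Odd).image (· + 1) := by
  intro j hj
  simp only [mem_filter, Walk.mem_positionsIn] at hj
  obtain ⟨⟨hjk, hjB⟩, hjb⟩ := hj
  have hparity := hP.mk_mem_iff_odd
  have hj0 : j ≠ 0 := by
    rintro rfl
    exact hB.not_isFree hjB hjb (by simpa using hP.2.2.1)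
  have hjk' : j ≠ P.length := by
    rintro rfl
    exact hB.not_isFree hjB hjb (by simpa using hP.2.2.2.1)
  simp only [mem_union, mem_image, mem_filter, Walk.mem_edgeIndicesIn]
  rcases Nat.even_or_odd j with hj | hj
  · obtain ⟨i, rfl⟩ : ∃ i, j = i + 1 := Nat.exists_eq_succ_of_ne_zero hj0
    have hi : Odd i := by simpa [Nat.even_add_one] using hj
    have hmem := (hparity i (by omega)).2 hi
    rw [Sym2.eq_swap] at hmem
    exact Or.inr ⟨i, ⟨⟨by omega, hB.mem_of_mk_mem_s10 hM hjB hjb hmem, hjB⟩, hi⟩, rfl⟩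
  · have hmem := (hparity j (by omega)).2 hj
    exact Or.inl ⟨⟨by omega, hjB, hB.mem_of_mk_mem_s10 hM hjB hjb hmem⟩, hj⟩

lemma IsAugmenting.sum_neg_one_pow_edgeIndicesIn_nonpos (hM : IsMatchingSet G M)
    (hP : IsAugmenting M P) (hB : InternallyNearMatched M B b) :
    ∑ i ∈ P.edgeIndicesIn B, (-1 : ℝ) ^ i ≤ 0 := by
  set E := P.edgeIndicesIn B
  set O := E.filter Odd
  -- Fewer edges than visited vertices of `B`; all visited vertices but the base lie on matched
  -- edges inside `B`.
  have hcard : E.card ≤ 2 * O.card := calc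
    E.card ≤ (P.positionsIn B).card - 1 := card_filter_succ_mem_le _
    _ ≤ ((P.positionsIn B).filter (P.getVert · ≠ b)).card := by
      have := hP.1.card_positionsIn_le (B := B) b
      omega
    _ ≤ (O ∪ O.image (· + 1)).card := card_le_card (hP.positionsIn_filter_ne_subset hM hB)
    _ ≤ O.card + O.card := (card_union_le _ _).trans (Nat.add_le_add_left card_image_le _)
    _ = 2 * O.card := by ring
  have hsplit : O.card + (E.filter (¬Odd ·)).card = E.card :=
    card_filter_add_card_filter_not _
  rw [← sum_filter_add_sum_filter_not E Odd,
    sum_congr rfl fun i hi => (mem_filter.1 hi).2.neg_one_pow,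
    sum_congr rfl fun i hi => (Nat.not_odd_iff_even.1 (mem_filter.1 hi).2).neg_one_pow]
  simp only [sum_const, nsmul_eq_mul, mul_neg, mul_one]
  have : ((E.filter (¬Odd ·)).card : ℝ) ≤ O.card := by exact_mod_cast (by omega : _ ≤ O.card)
  linarith

end Blossom

section Dual

variable {G : SimpleGraph V} {M : Finset (Sym2 V)} {u v : V} {P : G.Walk u v}
  (y : V → ℝ) (𝓑 : Finset (Finset V)) (z : Finset V → ℝ)

lemma sum_neg_one_pow_mul_dualLoad (hodd : Odd P.length) :
    ∑ i ∈ range P.length, (-1 : ℝ) ^ i * dualLoad y 𝓑 z (P.getVert i) (P.getVert (i + 1)) =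
      y u + y v + ∑ B ∈ 𝓑, z B * ∑ i ∈ P.edgeIndicesIn B, (-1 : ℝ) ^ i := by
  have hblossom (B : Finset V) : (range P.length).filter
      (fun i => P.getVert i ∈ B ∧ P.getVert (i + 1) ∈ B) = P.edgeIndicesIn B := by
    ext i
    simp [Walk.mem_edgeIndicesIn]
  have hswap : ∑ i ∈ range P.length, (-1 : ℝ) ^ i *
      ∑ B ∈ 𝓑.filter (fun B => P.getVert i ∈ B ∧ P.getVert (i + 1) ∈ B), z B =
      ∑ B ∈ 𝓑, z B * ∑ i ∈ P.edgeIndicesIn B, (-1 : ℝ) ^ i := by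
    simp_rw [← hblossom, mul_sum, sum_filter]
    rw [sum_comm]
    simp_rw [mul_comm]
  calc _ = ∑ i ∈ range P.length, (-1 : ℝ) ^ i * (y (P.getVert i) + y (P.getVert (i + 1))) +
        ∑ i ∈ range P.length, (-1 : ℝ) ^ i *
          ∑ B ∈ 𝓑.filter (fun B => P.getVert i ∈ B ∧ P.getVert (i + 1) ∈ B), z B := by
        simp only [dualLoad, mul_add, sum_add_distrib]
    _ = _ := by
        rw [sum_range_neg_one_pow_mul_add (fun i => y (P.getVert i)) hodd, hswap,
          Walk.getVert_zero, Walk.getVert_length]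

variable {w : Sym2 V → ℝ}

lemma IsAugmenting.neg_one_pow_sub_one_le_mul_dualLoad
    (hw : ∀ e : Sym2 V, (e ∈ M → w e = 2) ∧ (e ∉ M → w e = 0))
    (hdom : ∀ u v : V, G.Adj u v → Dominated w y 𝓑 z u v)
    (htight : ∀ u v : V, s(u, v) ∈ M → Tight w y 𝓑 z u v) (hP : IsAugmenting M P) {i : ℕ}
    (hi : i < P.length) :
    (-1 : ℝ) ^ i - 1 ≤ (-1) ^ i * dualLoad y 𝓑 z (P.getVert i) (P.getVert (i + 1)) := by
  have hparity := hP.mk_mem_iff_odd i hi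
  rcases Nat.even_or_odd i with heven | hodd
  · have hload := hdom _ _ (P.adj_getVert_succ hi)
    rw [Dominated, (hw _).2 (by simpa [hparity] using heven)] at hload
    rw [heven.neg_one_pow]
    linarith
  · have hload := htight _ _ (hparity.2 hodd)
    rw [Tight, (hw _).1 (hparity.2 hodd)] at hload
    rw [hodd.neg_one_pow, ← hload]
    norm_num

lemma IsAugmenting.one_sub_length_le
    (hw : ∀ e : Sym2 V, (e ∈ M → w e = 2) ∧ (e ∉ M → w e = 0))
    (hdom : ∀ u v : V, G.Adj u v → Dominated w y 𝓑 z u v)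
    (htight : ∀ u v : V, s(u, v) ∈ M → Tight w y 𝓑 z u v) (hM : IsMatchingSet G M)
    {base : Finset V → V}
    (h𝓑 : ∀ B ∈ 𝓑, InternallyNearMatched M B (base B)) (hz : ∀ B ∈ 𝓑, 0 ≤ z B)
    (hP : IsAugmenting M P) : 1 - (P.length : ℝ) ≤ y u + y v := by
  have hodd := hP.odd_length
  calc 1 - (P.length : ℝ) = ∑ i ∈ range P.length, ((-1 : ℝ) ^ i - 1) := by
        simp [sum_sub_distrib, neg_one_geom_sum, Nat.not_even_iff_odd.2 hodd]
    _ ≤ ∑ i ∈ range P.length, (-1 : ℝ) ^ i * dualLoad y 𝓑 z (P.getVert i) (P.getVert (i + 1)) :=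
        sum_le_sum fun i hi =>
          hP.neg_one_pow_sub_one_le_mul_dualLoad y 𝓑 z hw hdom htight (mem_range.1 hi)
    _ = y u + y v + ∑ B ∈ 𝓑, z B * ∑ i ∈ P.edgeIndicesIn B, (-1 : ℝ) ^ i :=
        sum_neg_one_pow_mul_dualLoad y 𝓑 z hodd
    _ ≤ y u + y v := add_le_of_nonpos_right <| sum_nonpos fun B hB =>
        mul_nonpos_of_nonneg_of_nonpos (hz B hB)
          (hP.sum_neg_one_pow_edgeIndicesIn_nonpos hM (h𝓑 B hB))

end Dual

theorem free_dual_lower_bound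
    {V : Type*} [Fintype V] (G : SimpleGraph V) (M : Finset (Sym2 V))
    (w : Sym2 V → ℝ) (y : V → ℝ) (𝓑 : Finset (Finset V)) (z : Finset V → ℝ)
    (base : Finset V → V)
    (hM : IsMatchingSet G M)
    (hw : ∀ e : Sym2 V, (e ∈ M → w e = 2) ∧ (e ∉ M → w e = 0))
    (h𝓑 : ∀ B ∈ 𝓑, InternallyNearMatched M B (base B))
    (hz : ∀ B ∈ 𝓑, 0 ≤ z B)
    (hdom : ∀ u v : V, G.Adj u v → Dominated w y 𝓑 z u v)
    (htight : ∀ u v : V, s(u, v) ∈ M → Tight w y 𝓑 z u v)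
    {f₁ f₂ : V} (P : G.Walk f₁ f₂) (hP : IsAugmenting M P) :
    y f₁ + y f₂ ≥ 2 - (Fintype.card V : ℝ) ∧
      ∀ yf : ℝ, (∀ f : V, IsFree M f → y f = yf) →
        yf ≥ 1 - (Fintype.card V : ℝ) / 2 := by
  have hbound := hP.one_sub_length_le y 𝓑 z hw hdom htight hM h𝓑 hz
  obtain ⟨hpath, -, hfree₁, hfree₂, -⟩ := hP
  have hcard : (P.length : ℝ) + 1 ≤ Fintype.card V := by exact_mod_cast hpath.length_lt
  refine ⟨by linarith, fun yf hyf => ?_⟩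
  rw [hyf f₁ hfree₁, hyf f₂ hfree₂] at hbound
  linarith
end

section
/- Let C be a cycle with vertices v₀, v₁, …, v₂ₖ (k ≥ 1, in cyclic order, so its edges are v₀v₁, v₁v₂, …, v₂ₖ₋₁v₂ₖ, v₂ₖv₀), and suppose the matched edges of M with both ends on C are exactly the edges v₂ᵢ₋₁v₂ᵢ for i = 1, …, k. Then every vertex v of C admits an even-length alternating path from v to v₀ using only edges of C, which, when v ≠ v₀, starts with the matched edge incident to v (for v = v₀ the path has no edges). -/
open SimpleGraph

attribute [local instance] Classical.propDecidable

variable {V : Type*}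

/-!
Read the cycle as the `(2k+1)`-periodic sequence `a ↦ v a`, so that edge `a` joins `v a` and
`v (a + 1)` and is matched exactly when `a` is odd (the closing edge is `a = 2k`). From an even
index `i` walk down `i, i - 1, …, 0`; from an odd index walk up `i, i + 1, …, 2k + 1 ≡ 0`. Either
way the walk has even length and its `j`-th edge has index of parity opposite to `j`, so it is
matched exactly when `j` is even: the walk starts with the matched edge at `v i` and alternates.
-/

namespace SimpleGraph.Walk

variable {G : SimpleGraph V}

def ofSeq (u : ℕ → V) : (n : ℕ) → (∀ j < n, G.Adj (u j) (u (j + 1))) → G.Walk (u 0) (u n)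
  | 0, _ => nil
  | n + 1, h =>
    cons (h 0 n.succ_pos) (ofSeq (fun j => u (j + 1)) n fun j hj => h (j + 1) (by omega))

variable {u : ℕ → V} {n : ℕ} (h : ∀ j < n, G.Adj (u j) (u (j + 1)))

@[simp]
theorem length_ofSeq : (ofSeq u n h).length = n := by
  induction n generalizing u with
  | zero => rfl
  | succ n ih => simp [ofSeq, ih]

theorem support_ofSeq : (ofSeq u n h).support = (List.range (n + 1)).map u := by
  induction n generalizing u with
  | zero => rfl
  | succ n ih => simp [ofSeq, ih, List.range_succ_eq_map (n := n + 1)]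

theorem edges_ofSeq : (ofSeq u n h).edges = (List.range n).map fun j => s(u j, u (j + 1)) := by
  induction n generalizing u with
  | zero => rfl
  | succ n ih => simp [ofSeq, ih, List.range_succ_eq_map (n := n)]

theorem isPath_ofSeq (hu : Set.InjOn u (Set.Iic n)) : (ofSeq u n h).IsPath := by
  rw [isPath_def, support_ofSeq]
  refine List.nodup_range.map_on fun a ha b hb hab => hu ?_ ?_ hab <;> simp_all

theorem isAlternating_ofSeq {M : Finset (Sym2 V)}
    (hM : ∀ j < n, s(u j, u (j + 1)) ∈ M ↔ Even j) : _root_.IsAlternating M (ofSeq u n h) := by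
  show List.IsChain _ _
  rw [edges_ofSeq, List.isChain_map, List.isChain_range]
  intro j hj
  rw [hM j (by omega), hM (j + 1) (by omega), Nat.even_add_one]
  tauto

end SimpleGraph.Walk

section OddCycle

variable {G : SimpleGraph V} {M : Finset (Sym2 V)} {w : ℕ → V} {N : ℕ}

theorem injOn_Ioc_of_injOn_Iio (hwN : w N = w 0) (hw : Set.InjOn w (Set.Iio N)) :
    Set.InjOn w (Set.Ioc 0 N) := by
  rintro a ⟨ha0, haN⟩ b ⟨hb0, hbN⟩ hab
  obtain ha | rfl := haN.lt_or_eq <;> obtain hb | rfl := hbN.lt_or_eq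
  · exact hw ha hb hab
  · exact absurd (hw ha (show 0 < b from ha0.trans ha) (hab.trans hwN)) ha0.ne'
  · exact absurd (hw (show 0 < a from hb0.trans hb) hb (hwN.symm.trans hab)) hb0.ne
  · rfl

theorem exists_even_arc_to_zero (hN : Odd N) (hwN : w N = w 0) (hw : Set.InjOn w (Set.Iio N))
    {i : ℕ} (hi : i < N) :
    ∃ (u : ℕ → V) (n : ℕ), u 0 = w i ∧ u n = w 0 ∧ Even n ∧ Set.InjOn u (Set.Iic n) ∧
      ∀ j < n, ∃ a < N, (Odd a ↔ Even j) ∧ s(u j, u (j + 1)) = s(w a, w (a + 1)) := by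
  rcases Nat.even_or_odd i with hi' | hi'
  · refine ⟨fun j => w (i - j), i, by simp, by simp, hi', ?_, fun j hj => ?_⟩
    · intro a ha b hb hab
      have := hw (show i - a < N by omega) (show i - b < N by omega) hab
      simp only [Set.mem_Iic] at ha hb
      omega
    · refine ⟨i - (j + 1), by omega, ?_, ?_⟩
      · simp only [Nat.odd_iff, Nat.even_iff] at hi' ⊢
        omega
      · rw [Sym2.eq_swap, show i - (j + 1) + 1 = i - j by omega]
  · refine ⟨fun j => w (i + j), N - i, by simp, by simpa [Nat.add_sub_cancel' hi.le] using hwN,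
      Nat.Odd.sub_odd hN hi', ?_, fun j hj => ⟨i + j, by omega, by simp [Nat.odd_add, hi'], rfl⟩⟩
    intro a ha b hb hab
    simp only [Set.mem_Iic] at ha hb
    have := hi'.pos
    have := injOn_Ioc_of_injOn_Iio hwN hw (show i + a ∈ Set.Ioc 0 N from ⟨by omega, by omega⟩)
      (show i + b ∈ Set.Ioc 0 N from ⟨by omega, by omega⟩) hab
    omega

theorem exists_even_alternating_path_to_zero (hN : Odd N) (hwN : w N = w 0)
    (hw : Set.InjOn w (Set.Iio N)) (hadj : ∀ a < N, G.Adj (w a) (w (a + 1)))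
    (hM : ∀ a < N, s(w a, w (a + 1)) ∈ M ↔ Odd a) {i : ℕ} (hi : i < N) :
    ∃ Q : G.Walk (w i) (w 0), Q.IsPath ∧ Even Q.length ∧ IsAlternating M Q ∧
      (∀ e ∈ Q.edges, ∃ a < N, e = s(w a, w (a + 1))) ∧
      (w i ≠ w 0 → ∃ h : Q.edges ≠ [], Q.edges.head h ∈ M) ∧ (w i = w 0 → Q.length = 0) := by
  obtain ⟨u, n, hu0, hun, hn, hu, hstep⟩ := exists_even_arc_to_zero hN hwN hw hi
  choose a ha hpar hedge using hstep
  have hadj_u : ∀ j < n, G.Adj (u j) (u (j + 1)) := fun j hj => by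
    rw [← SimpleGraph.mem_edgeSet, hedge j hj, SimpleGraph.mem_edgeSet]
    exact hadj _ (ha j hj)
  have hM_u : ∀ j < n, s(u j, u (j + 1)) ∈ M ↔ Even j := fun j hj => by
    rw [hedge j hj, hM _ (ha j hj), hpar j hj]
  have hn0 : n = 0 ↔ w i = w 0 := by
    rw [← hu0, ← hun]
    exact ⟨fun h => h ▸ rfl, fun h => (hu (by simp) (by simp) h).symm⟩
  refine ⟨(Walk.ofSeq u n hadj_u).copy hu0 hun, (Walk.isPath_copy _ _ _).mpr
    (Walk.isPath_ofSeq hadj_u hu), ?_, ?_, fun e he => ?_, fun hi => ?_, fun hi => ?_⟩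
  · rwa [Walk.length_copy, Walk.length_ofSeq]
  · rw [_root_.IsAlternating, Walk.edges_copy]
    exact Walk.isAlternating_ofSeq hadj_u hM_u
  · rw [Walk.edges_copy, Walk.edges_ofSeq] at he
    obtain ⟨j, hj, rfl⟩ := List.mem_map.mp he
    exact ⟨_, ha j (List.mem_range.mp hj), hedge j _⟩
  · obtain ⟨m, rfl⟩ := Nat.exists_eq_succ_of_ne_zero (mt hn0.mp hi)
    rw [Walk.edges_copy]
    exact ⟨List.cons_ne_nil _ _, (hM_u 0 m.succ_pos).mpr Even.zero⟩
  · rw [Walk.length_copy, Walk.length_ofSeq, hn0]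
    exact hi

end OddCycle

section BlossomCycle

open Fin.NatCast

variable {G : SimpleGraph V} {M : Finset (Sym2 V)} {k : ℕ} {v : Fin (2 * k + 1) → V}

theorem natCast_edge_cases {a : ℕ} (ha : a < 2 * k + 1) :
    (∃ j : Fin (2 * k), j.val = a ∧ s(v a, v (a + 1 : ℕ)) = s(v j.castSucc, v j.succ)) ∨
      a = 2 * k ∧ s(v a, v (a + 1 : ℕ)) = s(v (Fin.last _), v 0) := by
  obtain ha | rfl := Nat.lt_succ_iff_lt_or_eq.mp ha
  · exact .inl ⟨⟨a, ha⟩, rfl, by rw [Fin.natCast_eq_mk, Fin.natCast_eq_mk]; rfl⟩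
  · exact .inr ⟨rfl, by rw [Fin.natCast_eq_last, Fin.natCast_self]⟩

theorem adj_natCast_succ (hadj : ∀ j : Fin (2 * k), G.Adj (v j.castSucc) (v j.succ))
    (hlast : G.Adj (v (Fin.last _)) (v 0)) {a : ℕ} (ha : a < 2 * k + 1) :
    G.Adj (v a) (v (a + 1 : ℕ)) := by
  rw [← SimpleGraph.mem_edgeSet]
  rcases natCast_edge_cases (v := v) ha with ⟨j, -, he⟩ | ⟨-, he⟩ <;> rw [he]
  exacts [hadj j, hlast]

theorem natCast_mem_iff_odd (hinj : Function.Injective v)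
    (hmatch : ∀ e : Sym2 V, (e ∈ M ∧ ∀ x ∈ e, ∃ i, x = v i) ↔
      ∃ j : Fin (2 * k), Odd j.val ∧ e = s(v j.castSucc, v j.succ))
    {a : ℕ} (ha : a < 2 * k + 1) : s(v a, v (a + 1 : ℕ)) ∈ M ↔ Odd a := by
  have hends : ∀ x ∈ s(v a, v (a + 1 : ℕ)), ∃ i, x = v i := by
    rintro x hx
    rcases Sym2.mem_iff.mp hx with rfl | rfl <;> exact ⟨_, rfl⟩
  refine (and_iff_left hends).symm.trans ((hmatch _).trans ?_)
  rcases natCast_edge_cases (v := v) ha with ⟨j₀, rfl, he⟩ | ⟨rfl, he⟩ <;>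
    simp only [he, Sym2.eq_iff, hinj.eq_iff, Fin.ext_iff, Fin.val_castSucc, Fin.val_succ,
      Fin.val_last, Fin.val_zero]
  · refine ⟨fun ⟨j, hj, h⟩ => ?_, fun h => ⟨j₀, h, .inl ⟨rfl, rfl⟩⟩⟩
    rcases h with ⟨h, -⟩ | ⟨h, h'⟩
    · rwa [h]
    · omega
  · refine iff_of_false (fun ⟨j, _, h⟩ => ?_) (by rintro ⟨c, hc⟩; omega)
    have := j.isLt
    omega

theorem natCast_injOn (hinj : Function.Injective v) :
    Set.InjOn (fun a : ℕ => v a) (Set.Iio (2 * k + 1)) := fun a ha b hb hab => by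
  simpa [Fin.ext_iff, Nat.mod_eq_of_lt ha, Nat.mod_eq_of_lt hb] using hinj hab

end BlossomCycle

theorem blossom_cycle_even_alternating_path_to_base
    {V : Type*} (G : SimpleGraph V) (M : Finset (Sym2 V))
    (k : ℕ) (v : Fin (2 * k + 1) → V)
    (hinj : Function.Injective v)
    (hadj : ∀ i : ℕ, ∀ h : i < 2 * k,
      G.Adj (v ⟨i, by omega⟩) (v ⟨i + 1, by omega⟩))
    (hadj' : G.Adj (v ⟨2 * k, by omega⟩) (v ⟨0, by omega⟩))
    (hmatch : ∀ e : Sym2 V,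
      (e ∈ M ∧ ∀ x ∈ e, ∃ i, x = v i) ↔
        ∃ i : ℕ, ∃ h : i < k,
          e = s(v ⟨2 * i + 1, by omega⟩, v ⟨2 * i + 2, by omega⟩)) :
    ∀ i : Fin (2 * k + 1), ∃ Q : G.Walk (v i) (v ⟨0, by omega⟩),
      Q.IsPath ∧ Even Q.length ∧ IsAlternating M Q ∧
      (∀ e ∈ Q.edges,
        (∃ j : ℕ, ∃ h : j < 2 * k, e = s(v ⟨j, by omega⟩, v ⟨j + 1, by omega⟩)) ∨
          e = s(v ⟨2 * k, by omega⟩, v ⟨0, by omega⟩)) ∧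
      (v i ≠ v ⟨0, by omega⟩ → ∃ h : Q.edges ≠ [], Q.edges.head h ∈ M) ∧
      (v i = v ⟨0, by omega⟩ → Q.length = 0) := by
  intro i
  have hmatch_odd : ∀ e : Sym2 V, (e ∈ M ∧ ∀ x ∈ e, ∃ i, x = v i) ↔
      ∃ j : Fin (2 * k), Odd j.val ∧ e = s(v j.castSucc, v j.succ) := by
    refine fun e => (hmatch e).trans ⟨?_, ?_⟩
    · rintro ⟨c, hc, rfl⟩
      exact ⟨⟨2 * c + 1, by omega⟩, ⟨c, rfl⟩, rfl⟩
    · rintro ⟨⟨_, hj⟩, ⟨c, rfl⟩, rfl⟩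
      exact ⟨c, by omega, rfl⟩
  open Fin.NatCast in
  obtain ⟨Q, hQ, hlen, halt, hedges, hhead, hnil⟩ :=
    exists_even_alternating_path_to_zero (w := fun a : ℕ => v a) (odd_two_mul_add_one k)
      (by simp) (natCast_injOn hinj)
      (fun _ ha => adj_natCast_succ (fun j => hadj j j.isLt) hadj' ha)
      (fun _ ha => natCast_mem_iff_odd hinj hmatch_odd ha) i.isLt
  open Fin.NatCast in
  obtain ⟨hvi, hv0⟩ : v (i.val : Fin (2 * k + 1)) = v i ∧
      v ((0 : ℕ) : Fin (2 * k + 1)) = v ⟨0, by omega⟩ := by simp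
  refine ⟨Q.copy hvi hv0, (Walk.isPath_copy _ _ _).mpr hQ, by rwa [Walk.length_copy],
    by rwa [_root_.IsAlternating, Walk.edges_copy], fun e he => ?_, fun hne => ?_, fun heq => ?_⟩
  · obtain ⟨a, ha, rfl⟩ := hedges e (by rwa [Walk.edges_copy] at he)
    rcases natCast_edge_cases ha with ⟨j, rfl, he⟩ | ⟨-, he⟩
    exacts [.inl ⟨j, j.isLt, he⟩, .inr he]
  · rw [Walk.edges_copy]
    exact hhead (hvi ▸ hv0 ▸ hne)
  · rw [Walk.length_copy]
    exact hnil (hvi.trans (heq.trans hv0.symm))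
end
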